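/- arXiv:2408.11543 — 4 statements merged into one kernel-verified Lean document; each statement's English description precedes it below -/
import Mathlib

section
/- Let G be a finitely generated infinite group and π : G → H a surjective group homomorphism onto an infinite group H. Let d_G be a word metric on G with respect to a finite symmetric generating set and d_H a word metric on H with respect to a finite symmetric generating set, with |x|_G = d_G(x,1) and |q|_H = d_H(q,1). Assume there exists C ≥ 1 such that |π(x)|_H ≤ C·|x|_G for every x ∈ G, and such that for every q ∈ H there exists x ∈ G with π(x) = q and |x|_G ≤ C·|q|_H. Fix an integer M > C and define D(x,y) = max{ d_G(x,y), M·d_H(π(x),π(y)) }. Then D is a Banach metric on G. -/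
/-!
Outside a large ball, every Busemann function `b_x` of `D` has absolute value at least `K` at
some point of a fixed finite ball of `G`; this rules out bounded metric functionals. Let `z₀` be
the point at distance `i` from `1` on an `S`-geodesic to `x`, and `z = z₀ g` where `g` lifts the
first `j` steps of a `T`-geodesic from `π z₀` to `π x`. Then
`d_S(x, z) ≤ D(x, 1) - (i - C j)`, so either `b_x(z) ≤ -K`, or the `H`-part `M d_T(π x, π z)`
dominates `D(x, z)`; in the latter case `d_T(π x, π z₀)` exceeds `d_T(π x, π z)` by `j`, whence
`b_x(z₀) ≥ M j - K`. The remaining properties of `D` follow from `d_S ≤ D ≤ max 1 (M C) • d_S`.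
-/

open Filter Topology

section Defs

variable {G : Type*}

/-- `d` is a metric on `X` (nonnegative, vanishing exactly on the diagonal,
symmetric, triangle inequality). -/
def IsMetric {X : Type*} (d : X → X → ℝ) : Prop :=
  (∀ x y, 0 ≤ d x y) ∧ (∀ x y, d x y = 0 ↔ x = y) ∧ (∀ x y, d x y = d y x) ∧
    (∀ x y z, d x z ≤ d x y + d y z)

/-- The Busemann function of `x` with base point `1`: `b_x(y) = d(x,y) - d(x,1)`. -/
def bus [Group G] (d : G → G → ℝ) (x y : G) : ℝ := d x y - d x 1

/-- `h` belongs to the metric-functional boundary `∂(G,d)`: it is a pointwise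
limit of Busemann functions and is not itself a Busemann function. -/
def InBoundary [Group G] (d : G → G → ℝ) (h : G → ℝ) : Prop :=
  (∃ u : ℕ → G, ∀ y : G, Tendsto (fun n => bus d (u n) y) atTop (𝓝 (h y))) ∧
    ∀ x : G, h ≠ bus d x

/-- The action of `x ∈ G` on functions: `(x.h)(y) = h(x⁻¹y) - h(x⁻¹)`. -/
def act [Group G] (x : G) (h : G → ℝ) : G → ℝ := fun y => h (x⁻¹ * y) - h x⁻¹

/-- `S` is a finite symmetric generating set of `G`. -/
def FinSymGen [Group G] (S : Set G) : Prop :=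
  S.Finite ∧ (∀ s ∈ S, s⁻¹ ∈ S) ∧ Subgroup.closure S = ⊤

/-- The word length of `x` with respect to `S`: the least `n` such that `x`
is a product of `n` elements of `S`. -/
noncomputable def wordLength [Group G] (S : Set G) (x : G) : ℕ :=
  sInf {n : ℕ | ∃ l : List G, (∀ s ∈ l, s ∈ S) ∧ l.length = n ∧ l.prod = x}

/-- The word metric with respect to `S` : `d_S(x,y) = |x⁻¹y|_S`. -/
noncomputable def wordDist [Group G] (S : Set G) (x y : G) : ℝ :=
  (wordLength S (x⁻¹ * y) : ℝ)

/-- `(G,d)` is quasi-isometric to a Cayley graph of `G`. -/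
def QIToCayley [Group G] (d : G → G → ℝ) : Prop :=
  ∃ S : Set G, FinSymGen S ∧ ∃ φ : G → G, ∃ C : ℝ, 0 < C ∧
    (∀ y : G, ∃ x : G, wordDist S (φ x) y ≤ C) ∧
    ∀ x y : G, C⁻¹ * d x y - C ≤ wordDist S (φ x) (φ y) ∧
      wordDist S (φ x) (φ y) ≤ C * d x y + C

/-- A Banach metric on `G`: an integer-valued, left-invariant, proper metric,
quasi-isometric to a Cayley graph, all of whose metric functionals are unbounded. -/
def IsBanachMetric [Group G] (d : G → G → ℝ) : Prop :=
  IsMetric d ∧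
  (∀ x y : G, ∃ n : ℕ, d x y = n) ∧
  (∀ x y z : G, d (z * x) (z * y) = d x y) ∧
  (∀ r : ℝ, {x : G | d x 1 ≤ r}.Finite) ∧
  QIToCayley d ∧
  ∀ h : G → ℝ, InBoundary d h → ¬ ∃ B : ℝ, ∀ x : G, |h x| ≤ B

/-- A virtual homomorphism on `G`: a function `φ : G → ℤ` restricting to a
nontrivial homomorphism on some finite index subgroup. -/
def IsVirtualHom [Group G] (φ : G → ℤ) : Prop :=
  ∃ H : Subgroup G, H.FiniteIndex ∧
    (∀ a b : G, a ∈ H → b ∈ H → φ (a * b) = φ a + φ b) ∧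
    ∃ a ∈ H, φ a ≠ 0

end Defs

section WordLength

variable {G : Type*} [Group G] {S : Set G}

lemma FinSymGen.inv_subset (hS : FinSymGen S) : S⁻¹ ⊆ S :=
  fun s hs => inv_inv s ▸ hS.2.1 _ hs

lemma FinSymGen.exists_list_prod_eq (hS : FinSymGen S) (x : G) :
    ∃ l : List G, (∀ s ∈ l, s ∈ S) ∧ l.prod = x := by
  have hx : x ∈ (Subgroup.closure S).toSubmonoid := by simp [hS.2.2]
  rw [Subgroup.closure_toSubmonoid, Set.union_eq_left.2 hS.inv_subset] at hx
  exact Submonoid.exists_list_of_mem_closure hx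

lemma wordLength_prod_le_length {l : List G} (hl : ∀ s ∈ l, s ∈ S) :
    wordLength S l.prod ≤ l.length :=
  Nat.sInf_le (Set.mem_ofPred.2 ⟨l, hl, rfl, rfl⟩)

lemma exists_list_length_eq_wordLength (hS : FinSymGen S) (x : G) :
    ∃ l : List G, (∀ s ∈ l, s ∈ S) ∧ l.length = wordLength S x ∧ l.prod = x := by
  obtain ⟨l, hl, hx⟩ := hS.exists_list_prod_eq x
  have hne : {n | ∃ l : List G, (∀ s ∈ l, s ∈ S) ∧ l.length = n ∧ l.prod = x}.Nonempty :=
    ⟨l.length, l, hl, rfl, hx⟩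
  exact Nat.sInf_mem hne

lemma wordLength_one : wordLength S (1 : G) = 0 :=
  Nat.le_zero.1 (wordLength_prod_le_length (l := []) (by simp))

lemma eq_one_of_wordLength_eq_zero (hS : FinSymGen S) {x : G} (hx : wordLength S x = 0) :
    x = 1 := by
  obtain ⟨l, -, hlen, rfl⟩ := exists_list_length_eq_wordLength hS x
  rw [hx, List.length_eq_zero_iff] at hlen
  simp [hlen]

lemma wordLength_mul_le (hS : FinSymGen S) (x y : G) :
    wordLength S (x * y) ≤ wordLength S x + wordLength S y := by
  obtain ⟨l₁, hl₁, hlen₁, rfl⟩ := exists_list_length_eq_wordLength hS x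
  obtain ⟨l₂, hl₂, hlen₂, rfl⟩ := exists_list_length_eq_wordLength hS y
  have hl : ∀ s ∈ l₁ ++ l₂, s ∈ S := by
    simp only [List.mem_append]
    rintro s (hs | hs)
    exacts [hl₁ s hs, hl₂ s hs]
  simpa [hlen₁, hlen₂] using wordLength_prod_le_length hl

lemma wordLength_inv (hS : FinSymGen S) (x : G) : wordLength S x⁻¹ = wordLength S x := by
  suffices h : ∀ y : G, wordLength S y⁻¹ ≤ wordLength S y from
    le_antisymm (h x) (by simpa using h x⁻¹)
  intro y
  obtain ⟨l, hl, hlen, rfl⟩ := exists_list_length_eq_wordLength hS y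
  have hl' : ∀ s ∈ (l.map fun s => s⁻¹).reverse, s ∈ S := by
    simp only [List.mem_reverse, List.mem_map]
    rintro _ ⟨s, hs, rfl⟩
    exact hS.2.1 s (hl s hs)
  simpa [← List.prod_inv_reverse, hlen] using wordLength_prod_le_length hl'

lemma exists_wordLength_le_and_wordLength_inv_mul_le (hS : FinSymGen S) (x : G) (i : ℕ) :
    ∃ z : G, wordLength S z ≤ i ∧ wordLength S (z⁻¹ * x) ≤ wordLength S x - i := by
  obtain ⟨l, hl, hlen, rfl⟩ := exists_list_length_eq_wordLength hS x
  refine ⟨(l.take i).prod, ?_, ?_⟩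
  · exact (wordLength_prod_le_length fun s hs => hl s (List.mem_of_mem_take hs)).trans
      (List.length_take_le i l)
  · rw [inv_mul_eq_of_eq_mul (List.prod_take_mul_prod_drop l i).symm, ← hlen]
    simpa using wordLength_prod_le_length fun s hs => hl s (List.mem_of_mem_drop hs)

lemma finite_setOf_wordLength_le (hS : FinSymGen S) (n : ℕ) :
    {x : G | wordLength S x ≤ n}.Finite := by
  have := hS.1.to_subtype
  refine ((List.finite_length_le S n).image fun l : List S => (l.map (↑)).prod).subset ?_
  intro x hx
  obtain ⟨l, hl, hlen, rfl⟩ := exists_list_length_eq_wordLength hS x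
  rw [Set.mem_ofPred, ← hlen] at hx
  lift l to List S using hl
  exact ⟨l, by simpa using hx, rfl⟩

end WordLength

section WordDist

variable {G : Type*} [Group G] {S : Set G}

lemma wordDist_self (x : G) : wordDist S x x = 0 := by
  simp [wordDist, wordLength_one]

lemma wordDist_mul_left (z x y : G) : wordDist S (z * x) (z * y) = wordDist S x y := by
  simp [wordDist, mul_assoc]

lemma wordDist_comm (hS : FinSymGen S) (x y : G) : wordDist S x y = wordDist S y x := by
  rw [wordDist, ← wordLength_inv hS, mul_inv_rev, inv_inv, wordDist]

lemma wordDist_eq_wordLength_inv_mul (hS : FinSymGen S) (x y : G) :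
    wordDist S x y = wordLength S (y⁻¹ * x) := by
  rw [wordDist_comm hS, wordDist]

lemma wordDist_one_right (hS : FinSymGen S) (x : G) : wordDist S x 1 = wordLength S x := by
  rw [wordDist_comm hS, wordDist, inv_one, one_mul]

lemma wordDist_triangle (hS : FinSymGen S) (x y z : G) :
    wordDist S x z ≤ wordDist S x y + wordDist S y z := by
  have h := wordLength_mul_le hS (x⁻¹ * y) (y⁻¹ * z)
  rw [mul_assoc, mul_inv_cancel_left] at h
  unfold wordDist
  exact_mod_cast h

lemma wordDist_eq_zero_iff (hS : FinSymGen S) {x y : G} : wordDist S x y = 0 ↔ x = y := by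
  refine ⟨fun h => inv_mul_eq_one.1 (eq_one_of_wordLength_eq_zero hS ?_),
    fun h => h ▸ wordDist_self x⟩
  unfold wordDist at h
  exact_mod_cast h

lemma finite_setOf_le_of_wordDist_le (hS : FinSymGen S) {d : G → G → ℝ}
    (hd : ∀ x y, wordDist S x y ≤ d x y) (r : ℝ) : {x : G | d x 1 ≤ r}.Finite := by
  refine (finite_setOf_wordLength_le hS ⌊r⌋₊).subset fun x hx => Nat.le_floor ?_
  rw [← wordDist_one_right hS]
  exact (hd x 1).trans hx

lemma qiToCayley_of_le (hS : FinSymGen S) {d : G → G → ℝ} {L : ℝ} (hL : 1 ≤ L)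
    (hlow : ∀ x y, wordDist S x y ≤ d x y) (hup : ∀ x y, d x y ≤ L * wordDist S x y) :
    QIToCayley d := by
  have hL₀ : 0 < L := zero_lt_one.trans_le hL
  refine ⟨S, hS, id, L, hL₀, fun y => ⟨y, by simp [wordDist_self, hL₀.le]⟩,
    fun x y => ⟨?_, ?_⟩⟩ <;> dsimp only [id]
  · have : L⁻¹ * d x y ≤ wordDist S x y := (inv_mul_le_iff₀ hL₀).2 (hup x y)
    linarith
  · have hd : 0 ≤ d x y := (Nat.cast_nonneg _).trans (hlow x y)
    nlinarith [hlow x y]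

end WordDist

section MetricFunctional

variable {G : Type*} [Group G] {d : G → G → ℝ} {h : G → ℝ}

lemma InBoundary.exists_tendsto_atTop (hd : ∀ r, {x : G | d x 1 ≤ r}.Finite)
    (hh : InBoundary d h) :
    ∃ u : ℕ → G, (∀ y, Tendsto (fun n => bus d (u n) y) atTop (𝓝 (h y))) ∧
      Tendsto (fun n => d (u n) 1) atTop atTop := by
  obtain ⟨⟨u, hu⟩, hne⟩ := hh
  refine ⟨u, hu, tendsto_atTop.2 fun r => ?_⟩
  by_contra hr
  have hball : ∃ᶠ n in atTop, ∃ x ∈ {x : G | d x 1 ≤ r}, u n = x :=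
    (not_eventually.1 hr).mono fun n hn => ⟨u n, le_of_not_ge hn, rfl⟩
  obtain ⟨x, -, hx⟩ := (hd r).frequently_exists.1 hball
  refine hne x (funext fun y => tendsto_nhds_unique_of_frequently_eq (hu y) tendsto_const_nhds
    (hx.mono fun n hn => ?_))
  rw [hn]

lemma InBoundary.not_bounded (hd : ∀ r, {x : G | d x 1 ≤ r}.Finite)
    (hlarge : ∀ K : ℝ, ∃ F : Set G, F.Finite ∧
      ∃ R : ℝ, ∀ x, R ≤ d x 1 → ∃ z ∈ F, K ≤ |bus d x z|)
    (hh : InBoundary d h) : ¬ ∃ B, ∀ y, |h y| ≤ B := by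
  rintro ⟨B, hB⟩
  obtain ⟨u, hu, hdu⟩ := hh.exists_tendsto_atTop hd
  obtain ⟨F, hF, R, hR⟩ := hlarge (B + 1)
  have hclose : ∀ᶠ n in atTop, ∀ z ∈ F, dist (bus d (u n) z) (h z) < 1 :=
    hF.eventually_all.2 fun z _ => Metric.tendsto_nhds.1 (hu z) 1 one_pos
  obtain ⟨n, hn, hRn⟩ := (hclose.and (hdu.eventually_ge_atTop R)).exists
  obtain ⟨z, hzF, hz⟩ := hR (u n) hRn
  have hnz := hn z hzF
  rw [Real.dist_eq] at hnz
  linarith [hB z, abs_sub_abs_le_abs_sub (bus d (u n) z) (h z)]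

end MetricFunctional

section MaxWordDist

variable {G H : Type*} [Group G] [Group H] (π : G →* H) {S : Set G} {T : Set H} {C M : ℝ}

noncomputable def maxWordDist (S : Set G) (T : Set H) (M : ℝ) (x y : G) : ℝ :=
  max (wordDist S x y) (M * wordDist T (π x) (π y))

lemma wordDist_map_le (h1 : ∀ x : G, (wordLength T (π x) : ℝ) ≤ C * wordLength S x) (x y : G) :
    wordDist T (π x) (π y) ≤ C * wordDist S x y := by
  simpa [wordDist] using h1 (x⁻¹ * y)

lemma wordDist_le_maxWordDist (x y : G) : wordDist S x y ≤ maxWordDist π S T M x y :=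
  le_max_left _ _

lemma maxWordDist_le (hM : 0 ≤ M)
    (h1 : ∀ x : G, (wordLength T (π x) : ℝ) ≤ C * wordLength S x) (x y : G) :
    maxWordDist π S T M x y ≤ max 1 (M * C) * wordDist S x y := by
  have hS₀ : 0 ≤ wordDist S x y := Nat.cast_nonneg _
  refine max_le (le_mul_of_one_le_left hS₀ (le_max_left _ _)) ?_
  calc M * wordDist T (π x) (π y) ≤ M * (C * wordDist S x y) :=
        mul_le_mul_of_nonneg_left (wordDist_map_le π h1 x y) hM
    _ ≤ max 1 (M * C) * wordDist S x y := by
        rw [← mul_assoc]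
        exact mul_le_mul_of_nonneg_right (le_max_right _ _) hS₀

lemma isMetric_maxWordDist (hS : FinSymGen S) (hT : FinSymGen T) (hM : 0 ≤ M) :
    IsMetric (maxWordDist π S T M) := by
  refine ⟨fun x y => (Nat.cast_nonneg _).trans (wordDist_le_maxWordDist π x y), fun x y => ?_,
    fun x y => by simp only [maxWordDist, wordDist_comm hS x, wordDist_comm hT (π x)],
    fun x y z => max_le ?_ ?_⟩
  · refine ⟨fun hxy => (wordDist_eq_zero_iff hS).1 (le_antisymm ?_ (Nat.cast_nonneg _)), ?_⟩
    · exact hxy ▸ wordDist_le_maxWordDist π x y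
    · rintro rfl
      simp [maxWordDist, wordDist_self]
  · exact (wordDist_triangle hS x y z).trans (add_le_add (le_max_left _ _) (le_max_left _ _))
  · calc M * wordDist T (π x) (π z)
        ≤ M * wordDist T (π x) (π y) + M * wordDist T (π y) (π z) := by
          rw [← mul_add]
          exact mul_le_mul_of_nonneg_left (wordDist_triangle hT _ _ _) hM
      _ ≤ _ := add_le_add (le_max_right _ _) (le_max_right _ _)

lemma exists_maxWordDist_eq_natCast {M : ℤ} (hM : 0 ≤ M) (x y : G) :
    ∃ n : ℕ, maxWordDist π S T M x y = n := by
  refine ⟨max (wordLength S (x⁻¹ * y)) (M.toNat * wordLength T ((π x)⁻¹ * π y)), ?_⟩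
  have hM' : ((M.toNat : ℕ) : ℝ) = M := by exact_mod_cast Int.toNat_of_nonneg hM
  simp [maxWordDist, wordDist, hM']

lemma maxWordDist_mul_left (z x y : G) :
    maxWordDist π S T M (z * x) (z * y) = maxWordDist π S T M x y := by
  simp only [maxWordDist, map_mul, wordDist_mul_left]

lemma exists_lift_step_toward (hT : FinSymGen T) (hC : 0 ≤ C)
    (h2 : ∀ q : H, ∃ x : G, π x = q ∧ (wordLength S x : ℝ) ≤ C * wordLength T q)
    (q : H) (j : ℕ) :
    ∃ g : G, (wordLength S g : ℝ) ≤ C * j ∧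
      (0 < wordLength T ((π g)⁻¹ * q) → wordLength T ((π g)⁻¹ * q) + j ≤ wordLength T q) := by
  obtain ⟨w, hw, hwq⟩ := exists_wordLength_le_and_wordLength_inv_mul_le hT q j
  obtain ⟨g, rfl, hg⟩ := h2 w
  refine ⟨g, hg.trans (mul_le_mul_of_nonneg_left (by exact_mod_cast hw) hC), fun hpos => ?_⟩
  omega

lemma le_abs_bus_maxWordDist_or (hM : 0 ≤ M) {x z₀ z : G} {K s : ℝ} (hs : 2 * K ≤ M * s)
    (hK : K ≤ maxWordDist π S T M x 1)
    (hSz : wordDist S x z ≤ maxWordDist π S T M x 1 - K)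
    (hTz : 0 < wordDist T (π x) (π z) →
      wordDist T (π x) (π z) + s ≤ wordDist T (π x) (π z₀)) :
    K ≤ |bus (maxWordDist π S T M) x z| ∨ K ≤ |bus (maxWordDist π S T M) x z₀| := by
  by_contra! hsmall
  obtain ⟨hz, hz₀⟩ := hsmall
  rw [bus, abs_sub_lt_iff] at hz hz₀
  have hMz : maxWordDist π S T M x 1 - K < M * wordDist T (π x) (π z) := by
    by_contra! hle
    have : maxWordDist π S T M x z ≤ maxWordDist π S T M x 1 - K := max_le hSz hle
    linarith [hz.2]
  have hpos : 0 < wordDist T (π x) (π z) := by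
    by_contra! hle
    linarith [mul_nonpos_of_nonneg_of_nonpos hM hle]
  have hz₀_ge : M * wordDist T (π x) (π z) + M * s ≤ maxWordDist π S T M x z₀ := by
    rw [← mul_add]
    exact (mul_le_mul_of_nonneg_left (hTz hpos) hM).trans (le_max_right _ _)
  linarith [hz₀.1]

lemma exists_geodesic_point_and_lift_step (hS : FinSymGen S) (hT : FinSymGen T) (hC : 0 ≤ C)
    (h2 : ∀ q : H, ∃ x : G, π x = q ∧ (wordLength S x : ℝ) ≤ C * wordLength T q)
    (x : G) {i : ℕ} (hi : i ≤ wordLength S x) (j : ℕ) :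
    ∃ z₀ g : G, (wordLength S z₀ : ℝ) ≤ i ∧ (wordLength S g : ℝ) ≤ C * j ∧
      wordDist S x (z₀ * g) ≤ wordLength S x - i + C * j ∧
      (0 < wordDist T (π x) (π (z₀ * g)) →
        wordDist T (π x) (π (z₀ * g)) + j ≤ wordDist T (π x) (π z₀)) := by
  obtain ⟨z₀, hz₀, hz₀x⟩ := exists_wordLength_le_and_wordLength_inv_mul_le hS x i
  obtain ⟨g, hg, hgx⟩ := exists_lift_step_toward π hT hC h2 ((π z₀)⁻¹ * π x) j
  refine ⟨z₀, g, by exact_mod_cast hz₀, hg, ?_, ?_⟩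
  · have hz₀x' : (wordLength S (z₀⁻¹ * x) : ℝ) ≤ wordLength S x - i := by
      rw [← Nat.cast_sub hi]
      exact_mod_cast hz₀x
    have hstep : wordDist S z₀ (z₀ * g) = wordLength S g := by simp [wordDist]
    have hle := wordDist_triangle hS x z₀ (z₀ * g)
    rw [wordDist_eq_wordLength_inv_mul hS x z₀, hstep] at hle
    linarith
  · rw [wordDist_eq_wordLength_inv_mul hT, wordDist_eq_wordLength_inv_mul hT, map_mul,
      mul_inv_rev, mul_assoc]
    exact_mod_cast hgx

lemma exists_abs_bus_maxWordDist_ge (hS : FinSymGen S) (hT : FinSymGen T) (hC : 0 ≤ C)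
    (hM : 1 ≤ M) (h1 : ∀ x : G, (wordLength T (π x) : ℝ) ≤ C * wordLength S x)
    (h2 : ∀ q : H, ∃ x : G, π x = q ∧ (wordLength S x : ℝ) ≤ C * wordLength T q) (K : ℝ) :
    ∃ F : Set G, F.Finite ∧ ∃ R : ℝ, ∀ x, R ≤ maxWordDist π S T M x 1 →
      ∃ z ∈ F, K ≤ |bus (maxWordDist π S T M) x z| := by
  set D := maxWordDist π S T M
  set j : ℕ := ⌈2 * K⌉₊
  set i : ℕ := ⌈C * j + K⌉₊
  set N : ℕ := ⌈i + C * j⌉₊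
  have hj : 2 * K ≤ M * j :=
    (Nat.le_ceil _).trans (le_mul_of_one_le_left (Nat.cast_nonneg _) hM)
  have hCj : 0 ≤ C * j := mul_nonneg hC (Nat.cast_nonneg _)
  have hi : C * j + K ≤ i := Nat.le_ceil _
  have hN : (i : ℝ) + C * j ≤ N := Nat.le_ceil _
  have hmem : ∀ z, (wordLength S z : ℝ) ≤ i + C * j → z ∈ {z | wordLength S z ≤ N} :=
    fun z hz => by exact_mod_cast hz.trans hN
  refine ⟨{z | wordLength S z ≤ N}, finite_setOf_wordLength_le hS N, max 1 (M * C) * i,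
    fun x hx => ?_⟩
  have hxD : (wordLength S x : ℝ) ≤ D x 1 :=
    wordDist_one_right hS x ▸ wordDist_le_maxWordDist π x 1
  have hix : i ≤ wordLength S x := by
    have hDx := wordDist_one_right hS x ▸ maxWordDist_le π (zero_le_one.trans hM) h1 x 1
    exact_mod_cast le_of_mul_le_mul_left (hx.trans hDx) (by positivity)
  have hix' : (i : ℝ) ≤ wordLength S x := by exact_mod_cast hix
  obtain ⟨z₀, g, hz₀, hg, hSz, hTz⟩ :=
    exists_geodesic_point_and_lift_step π hS hT hC h2 x hix j
  rcases le_abs_bus_maxWordDist_or π (zero_le_one.trans hM) hj (by linarith) (by linarith)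
      hTz with h | h
  · refine ⟨z₀ * g, hmem _ ?_, h⟩
    have hle : (wordLength S (z₀ * g) : ℝ) ≤ wordLength S z₀ + wordLength S g := by
      exact_mod_cast wordLength_mul_le hS z₀ g
    linarith
  · exact ⟨z₀, hmem _ (by linarith), h⟩

end MaxWordDist

theorem max_word_metric_isBanachMetric_general
    {G H : Type*} [Group G] [Group H]
    (π : G →* H)
    (S : Set G) (hS : FinSymGen S) (T : Set H) (hT : FinSymGen T)
    (C : ℝ) (hC : 1 ≤ C)
    (h1 : ∀ x : G, (wordLength T (π x) : ℝ) ≤ C * (wordLength S x : ℝ))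
    (h2 : ∀ q : H, ∃ x : G, π x = q ∧ (wordLength S x : ℝ) ≤ C * (wordLength T q : ℝ))
    (M : ℤ) (hM : C < (M : ℝ)) :
    IsBanachMetric
      (fun x y : G => max (wordDist S x y) ((M : ℝ) * wordDist T (π x) (π y))) := by
  change IsBanachMetric (maxWordDist π S T M)
  have hM₁ : (1 : ℝ) ≤ M := hC.trans hM.le
  have hM₀ : (0 : ℝ) ≤ M := zero_le_one.trans hM₁
  have hlow : ∀ x y, wordDist S x y ≤ maxWordDist π S T M x y := wordDist_le_maxWordDist π
  have hproper := finite_setOf_le_of_wordDist_le hS hlow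
  exact ⟨isMetric_maxWordDist π hS hT hM₀,
    exists_maxWordDist_eq_natCast π (by exact_mod_cast hM₀),
    fun x y z => maxWordDist_mul_left π z x y, hproper,
    qiToCayley_of_le hS (le_max_left _ _) hlow (maxWordDist_le π hM₀ h1),
    fun h hh => hh.not_bounded hproper
      (exists_abs_bus_maxWordDist_ge π hS hT (zero_le_one.trans hC) hM₁ h1 h2)⟩

/-- Combining a word metric on `G` with (M times) a word metric
on a quotient `H` via a maximum yields a Banach metric on `G`. -/
theorem max_word_metric_isBanachMetric
    {G H : Type*} [Group G] [Group H] [Infinite G] [Infinite H]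
    (π : G →* H) (hπ : Function.Surjective π)
    (S : Set G) (hS : FinSymGen S) (T : Set H) (hT : FinSymGen T)
    (C : ℝ) (hC : 1 ≤ C)
    (h1 : ∀ x : G, (wordLength T (π x) : ℝ) ≤ C * (wordLength S x : ℝ))
    (h2 : ∀ q : H, ∃ x : G, π x = q ∧ (wordLength S x : ℝ) ≤ C * (wordLength T q : ℝ))
    (M : ℤ) (hM : C < (M : ℝ)) :
    IsBanachMetric
      (fun x y : G => max (wordDist S x y) ((M : ℝ) * wordDist T (π x) (π y))) :=
  max_word_metric_isBanachMetric_general π S hS T hT C hC h1 h2 M hM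
end

section
/- Let G be a finitely generated infinite group that admits a virtual homomorphism. Then G has an infinite virtually abelian quotient: there exists a normal subgroup N ⊴ G such that G/N is infinite and contains an abelian subgroup of finite index. -/
open Filter Topology

/-!
On a finite-index subgroup `H` a virtual homomorphism is an honest homomorphism `f : H → ℤ`, which
kills `⁅H, H⁆`. The normal core `K` of `H` has finite index and is normal in `G`, hence so is
`N = ⁅K, K⁆ ≤ ⁅H, H⁆`; then `K / N` is an abelian subgroup of finite index in `G / N`, and any
`b ∈ H` with `f b ≠ 0` has infinite order modulo `N`, so `G / N` is infinite.
-/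

namespace Subgroup

variable {G A : Type*} [Group G] [CommGroup A]

lemma commutator_le_map_subtype_ker (H : Subgroup G) (f : H →* A) :
    ⁅H, H⁆ ≤ f.ker.map H.subtype :=
  calc ⁅H, H⁆ = (_root_.commutator H).map H.subtype := by
        rw [_root_.commutator_def, map_commutator, ← MonoidHom.range_eq_map, range_subtype]
    _ ≤ f.ker.map H.subtype := map_mono (Abelianization.commutator_subset_ker f)

lemma not_isOfFinOrder_mk_of_le_map_subtype_ker {H N : Subgroup G} [N.Normal] (f : H →* A)
    (hN : N ≤ f.ker.map H.subtype) {b : H} (hb : ¬IsOfFinOrder (f b)) :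
    ¬IsOfFinOrder ((b : G) : G ⧸ N) := by
  intro hfin
  obtain ⟨n, hn, hbn⟩ := hfin.exists_pow_eq_one
  rw [← QuotientGroup.mk_pow, QuotientGroup.eq_one_iff] at hbn
  obtain ⟨c, hc, hcb⟩ := hN hbn
  obtain rfl : c = b ^ n := Subtype.ext hcb
  rw [SetLike.mem_coe, MonoidHom.mem_ker, map_pow] at hc
  exact hb (isOfFinOrder_iff_pow_eq_one.mpr ⟨n, hn, hc⟩)

lemma infinite_quotient_of_le_map_subtype_ker {H N : Subgroup G} [N.Normal] (f : H →* A)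
    (hN : N ≤ f.ker.map H.subtype) {b : H} (hb : ¬IsOfFinOrder (f b)) :
    Infinite (G ⧸ N) :=
  not_finite_iff_infinite.mp fun _ ↦
    not_isOfFinOrder_mk_of_le_map_subtype_ker f hN hb (isOfFinOrder_of_finite _)

end Subgroup

lemma IsVirtualHom.exists_monoidHom_ne_one {G : Type*} [Group G] {φ : G → ℤ}
    (hφ : IsVirtualHom φ) :
    ∃ H : Subgroup G, H.FiniteIndex ∧ ∃ f : H →* Multiplicative ℤ, f ≠ 1 := by
  obtain ⟨H, hH, hadd, a, haH, ha⟩ := hφ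
  refine ⟨H, hH, MonoidHom.mk' (fun x ↦ .ofAdd (φ x)) fun x y ↦ ?_, ?_⟩
  · simp only [Subgroup.coe_mul, hadd x y x.2 y.2, ofAdd_add]
  · exact DFunLike.ne_iff.mpr ⟨⟨a, haH⟩, by simpa using ha⟩

theorem exists_infinite_virtually_abelian_quotient_of_virtualHom_general
    {G : Type*} [Group G]
    (hvh : ∃ φ : G → ℤ, IsVirtualHom φ) :
    ∃ N : Subgroup G, N.Normal ∧ Infinite (G ⧸ N) ∧
      ∃ H : Subgroup G, N ≤ H ∧ H.FiniteIndex ∧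
        ∀ a b : G, a ∈ H → b ∈ H → a * b * a⁻¹ * b⁻¹ ∈ N := by
  obtain ⟨φ, hφ⟩ := hvh
  obtain ⟨H, hH, f, hf⟩ := hφ.exists_monoidHom_ne_one
  obtain ⟨b, hb⟩ := DFunLike.ne_iff.mp hf
  set K := H.normalCore
  have hN : ⁅K, K⁆ ≤ f.ker.map H.subtype :=
    (Subgroup.commutator_mono H.normalCore_le H.normalCore_le).trans
      (H.commutator_le_map_subtype_ker f)
  exact ⟨⁅K, K⁆, Subgroup.commutator_normal K K,
    Subgroup.infinite_quotient_of_le_map_subtype_ker f hN (not_isOfFinOrder_of_isMulTorsionFree hb),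
    K, Subgroup.commutator_le_left K K, H.finiteIndex_normalCore,
    fun _ _ hx hy ↦ Subgroup.commutator_mem_commutator hx hy⟩

/-- If a finitely generated infinite group admits a virtual
homomorphism, then it has an infinite virtually abelian quotient: there is a
normal subgroup `N ⊴ G` with `G/N` infinite containing an abelian subgroup of
finite index.  (Subgroups of `G/N` correspond to subgroups `H` of `G` containing
`N`, with matching index; the image of `H` in `G/N` is abelian exactly when all
commutators of elements of `H` lie in `N`.) -/
theorem exists_infinite_virtually_abelian_quotient_of_virtualHom
    {G : Type*} [Group G] [Group.FG G] [Infinite G]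
    (hvh : ∃ φ : G → ℤ, IsVirtualHom φ) :
    ∃ N : Subgroup G, N.Normal ∧ Infinite (G ⧸ N) ∧
      ∃ H : Subgroup G, N ≤ H ∧ H.FiniteIndex ∧
        ∀ a b : G, a ∈ H → b ∈ H → a * b * a⁻¹ * b⁻¹ ∈ N :=
  exists_infinite_virtually_abelian_quotient_of_virtualHom_general hvh
end

section
/- Let F be the free group on a free generating set A with |A| = d ≥ 2. Then for every letter a ∈ A ∪ A⁻¹, every nontrivial element x ∈ F, and every ℓ ∈ ℕ, there exists t ∈ F such that |t⁻¹xt|_A > ℓ, the reduced word of t⁻¹xt does not begin with the letter a, and the reduced word of t⁻¹x⁻¹t does not begin with the letter a. -/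
open Filter Topology

/-!
Conjugate by `sⁿ` with `n = ℓ + 1`, where the letter `s` differs from the first letter of `x`,
from the inverse of its last letter and from `a⁻¹`; since there are `2d ≥ 4` letters, such an `s`
exists. Then nothing cancels in `s⁻ⁿ x sⁿ`, nor in `s⁻ⁿ x⁻¹ sⁿ`, because the first and last letters
of `x⁻¹` are the inverses of the last and first letters of `x`. Both reduced words therefore begin
with `s⁻¹ ≠ a` and have length more than `2n`.
-/

namespace FreeGroup

variable {α : Type*}

def invLetter (a : α × Bool) : α × Bool := (a.1, !a.2)

@[simp]
theorem invLetter_invLetter (a : α × Bool) : invLetter (invLetter a) = a := by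
  simp [invLetter]

theorem invLetter_eq_iff {a b : α × Bool} : invLetter a = b ↔ a = invLetter b := by
  constructor <;> rintro rfl <;> simp

theorem invRev_replicate (n : ℕ) (a : α × Bool) :
    invRev (List.replicate n a) = List.replicate n (invLetter a) := by
  simp [invRev, invLetter]

theorem exists_letter_ne_ne_ne [Nontrivial α] (a b c : α × Bool) :
    ∃ s, a ≠ s ∧ b ≠ s ∧ c ≠ s := by
  classical
  obtain ⟨j, k, hjk⟩ := exists_pair_ne α
  let e : Bool × Bool ↪ α × Bool :=
    ⟨fun p => (if p.1 then j else k, p.2), fun ⟨u, v⟩ ⟨u', v'⟩ h => by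
      cases u <;> cases u' <;> grind⟩
  obtain ⟨s, -, hs⟩ := Finset.exists_mem_notMem_of_card_lt_card
    (s := {a, b, c}) (t := Finset.univ.map e) (Finset.card_le_three.trans_lt (by simp))
  simp only [Finset.mem_insert, Finset.mem_singleton, not_or] at hs
  exact ⟨s, Ne.symm hs.1, Ne.symm hs.2.1, Ne.symm hs.2.2⟩

theorem isReduced_replicate (n : ℕ) (a : α × Bool) : IsReduced (List.replicate n a) :=
  List.isChain_replicate_of_rel n fun _ => rfl

theorem IsReduced.append {L₁ L₂ : List (α × Bool)} (h₁ : IsReduced L₁) (h₂ : IsReduced L₂)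
    (h : ∀ a ∈ L₁.getLast?, ∀ b ∈ L₂.head?, b ≠ invLetter a) : IsReduced (L₁ ++ L₂) := by
  refine List.isChain_append.mpr ⟨h₁, h₂, fun a ha b hb hab => ?_⟩
  by_contra hne
  exact h a ha b hb (Prod.ext hab.symm (Bool.eq_not.mpr (Ne.symm hne)))

variable [DecidableEq α]

theorem head?_toWord_inv (x : FreeGroup α) :
    x⁻¹.toWord.head? = x.toWord.getLast?.map invLetter := by
  rw [toWord_inv, invRev, List.head?_reverse, List.getLast?_map]
  rfl

theorem getLast?_toWord_inv (x : FreeGroup α) :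
    x⁻¹.toWord.getLast? = x.toWord.head?.map invLetter := by
  rw [toWord_inv, invRev, List.getLast?_reverse, List.head?_map]
  rfl

theorem toWord_conj_replicate {y : FreeGroup α} (hy : y ≠ 1) (n : ℕ) {s : α × Bool}
    (hhead : ∀ a ∈ y.toWord.head?, a ≠ s) (hlast : ∀ a ∈ y.toWord.getLast?, invLetter a ≠ s) :
    ((mk (List.replicate n s))⁻¹ * y * mk (List.replicate n s)).toWord =
      List.replicate n (invLetter s) ++ y.toWord ++ List.replicate n s := by
  conv_lhs => rw [inv_mk, invRev_replicate, ← mk_toWord (x := y), mul_mk, mul_mk, toWord_mk]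
  refine IsReduced.reduce_eq <|
    .append_overlap (.append (isReduced_replicate _ _) isReduced_toWord ?_)
      (.append isReduced_toWord (isReduced_replicate _ _) ?_) (mt toWord_eq_nil_iff.mp hy)
  · intro a ha b hb
    obtain rfl := List.eq_of_mem_replicate (List.mem_of_mem_getLast? ha)
    simpa using hhead b hb
  · intro a ha b hb
    obtain rfl := List.eq_of_mem_replicate (List.mem_of_mem_head? hb)
    exact fun h => hlast a ha h.symm

end FreeGroup

open FreeGroup

/-- In the free group on `A` (`|A| = d ≥ 2`), for every letter
`a ∈ A ∪ A⁻¹`, every nontrivial `x`, and every `ℓ`, there is `t` with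
`|t⁻¹xt|_A > ℓ` such that neither the reduced word of `t⁻¹xt` nor that of
`t⁻¹x⁻¹t` begins with `a`.
(A letter `a ∈ A ∪ A⁻¹` is encoded as a pair `(i, b) : α × Bool`, with
`(i, true)` standing for the generator `of i` and `(i, false)` for its inverse,
matching `FreeGroup.toWord`.) -/
theorem freeGroup_exists_long_conjugate
    {α : Type*} [DecidableEq α] {d : ℕ} (hd : 2 ≤ d) (hcard : Nat.card α = d)
    (i : α) (b : Bool) (x : FreeGroup α) (hx : x ≠ 1) (ℓ : ℕ) :
    ∃ t : FreeGroup α,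
      ℓ < (FreeGroup.toWord (t⁻¹ * x * t)).length ∧
      (∀ p ∈ (FreeGroup.toWord (t⁻¹ * x * t)).head?, p ≠ (i, b)) ∧
      (∀ p ∈ (FreeGroup.toWord (t⁻¹ * x⁻¹ * t)).head?, p ≠ (i, b)) := by
  have : Finite α := Nat.finite_of_card_ne_zero (by omega)
  have : Nontrivial α := Finite.one_lt_card_iff_nontrivial.mp (by omega)
  have hw : x.toWord ≠ [] := mt toWord_eq_nil_iff.mp hx
  obtain ⟨s, hsf, hsl, hsc⟩ := exists_letter_ne_ne_ne (x.toWord.head hw)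
    (invLetter (x.toWord.getLast hw)) (invLetter (i, b))
  have hhead : ∀ a ∈ x.toWord.head?, a ≠ s := by simpa [List.head?_eq_some_head hw] using hsf
  have hlast : ∀ a ∈ x.toWord.getLast?, invLetter a ≠ s := by
    simpa [List.getLast?_eq_some_getLast hw] using hsl
  have hstart (L : List (α × Bool)) :
      ∀ p ∈ (List.replicate (ℓ + 1) (invLetter s) ++ L).head?, p ≠ (i, b) := by
    rintro p hp rfl
    rw [List.replicate_succ, List.cons_append, List.head?_cons, Option.mem_some_iff] at hp
    exact hsc (invLetter_eq_iff.mp hp).symm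
  refine ⟨mk (List.replicate (ℓ + 1) s), ?_, ?_, ?_⟩
  · rw [toWord_conj_replicate hx _ hhead hlast]
    simp only [List.length_append, List.length_replicate]
    omega
  · rw [toWord_conj_replicate hx _ hhead hlast, List.append_assoc]
    exact hstart _
  · have hhead' : ∀ a ∈ x⁻¹.toWord.head?, a ≠ s := by
      simpa only [head?_toWord_inv, Option.forall_mem_map] using hlast
    have hlast' : ∀ a ∈ x⁻¹.toWord.getLast?, invLetter a ≠ s := by
      simpa only [getLast?_toWord_inv, Option.forall_mem_map, invLetter_invLetter] using hhead
    rw [toWord_conj_replicate (inv_ne_one.mpr hx) _ hhead' hlast', List.append_assoc]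
    exact hstart _
end

section
/- Let G be a group with a left-invariant integer-valued metric d, and let h : G → ℤ be a metric functional in ∂(G,d) that is an unbounded function and whose orbit {x.h : x ∈ G} under the G-action is finite. Let H = {x ∈ G : x.h = h} be the stabilizer of h. Then H has finite index in G and the restriction of h to H is a nontrivial group homomorphism from H to ℤ; in particular, h is a virtual homomorphism on G. -/
open Filter Topology

/-- The action of `x ∈ G` on integer-valued functions: `(x.h)(y) = h(x⁻¹y) - h(x⁻¹)`. -/
def actZ {G : Type*} [Group G] (x : G) (h : G → ℤ) : G → ℤ :=
  fun y => h (x⁻¹ * y) - h x⁻¹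

/-! Up to the constant `h(x⁻¹)`, `x.h` is the left translate of `h`, so `a.h = h` says exactly that
`h(a⁻¹y) = h(a⁻¹) + h(y)` for all `y`: on the stabilizer `H`, `h` is additive. A finite orbit means
`H` has finite index, by orbit–stabilizer. If `h` vanished on `H`, it would be constant on the finitely
many cosets `Hy`, hence bounded. -/

open MulAction

section

variable {G : Type*} [Group G]

theorem actZ_apply_one (x : G) (h : G → ℤ) : actZ x h 1 = 0 := by
  simp [actZ]

theorem actZ_one {h : G → ℤ} (h1 : h 1 = 0) : actZ 1 h = h := by
  funext y
  simp [actZ, h1]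

theorem actZ_mul (x y : G) (h : G → ℤ) : actZ (x * y) h = actZ x (actZ y h) := by
  funext z
  simp only [actZ, mul_inv_rev, mul_assoc]
  ring

variable (G) in
/-- `actZ` is a group action only on functions vanishing at `1`, since `actZ 1 h = h - h 1`. -/
abbrev NormalizedFun : Type _ := {h : G → ℤ // h 1 = 0}

instance : MulAction G (NormalizedFun G) where
  smul x h := ⟨actZ x h.1, actZ_apply_one x h.1⟩
  one_smul h := Subtype.ext (actZ_one h.2)
  mul_smul x y h := Subtype.ext (actZ_mul x y h.1)

namespace NormalizedFun

theorem smul_val (x : G) (h : NormalizedFun G) : (x • h).1 = actZ x h.1 := rfl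

theorem mem_stabilizer_iff {h : NormalizedFun G} {x : G} :
    x ∈ stabilizer G h ↔ actZ x h.1 = h.1 := by
  rw [MulAction.mem_stabilizer_iff, ← smul_val]
  exact Subtype.ext_iff

theorem orbit_finite_iff {h : NormalizedFun G} :
    (orbit G h).Finite ↔ (Set.range fun x : G => actZ x h.1).Finite := by
  have himage : Subtype.val '' orbit G h = Set.range fun x : G => actZ x h.1 :=
    (Set.range_comp _ _).symm
  rw [← himage, Set.finite_image_iff Subtype.val_injective.injOn]

theorem map_mul_of_mem_stabilizer {h : NormalizedFun G} {a : G} (ha : a ∈ stabilizer G h)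
    (y : G) : h.1 (a * y) = h.1 a + h.1 y := by
  have hy := congrFun (mem_stabilizer_iff.mp (inv_mem ha)) y
  simp only [actZ, inv_inv] at hy
  omega

end NormalizedFun

theorem MulAction.finiteIndex_stabilizer_of_finite_orbit {X : Type*} [MulAction G X] {x : X}
    (hx : (orbit G x).Finite) : (stabilizer G x).FiniteIndex :=
  have : Finite (G ⧸ stabilizer G x) :=
    have := hx.to_subtype
    .of_equiv _ (orbitEquivQuotientStabilizer G x)
  Subgroup.finiteIndex_of_finite_quotient

theorem Subgroup.finite_range_of_forall_mul_left_eq {α : Type*} (H : Subgroup G) [H.FiniteIndex]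
    {f : G → α} (hf : ∀ a ∈ H, ∀ y, f (a * y) = f y) : (Set.range f).Finite := by
  let g : G ⧸ H → α := Quotient.lift (fun x => f x⁻¹) fun x z hxz => by
    have hz : z⁻¹ = (x⁻¹ * z)⁻¹ * x⁻¹ := by group
    simp only [hz, hf _ (inv_mem (QuotientGroup.leftRel_apply.mp hxz))]
  refine (Set.finite_range g).subset ?_
  rintro _ ⟨y, rfl⟩
  exact ⟨QuotientGroup.mk y⁻¹, by simp [g]⟩

theorem exists_mem_ne_zero_of_unbounded {H : Subgroup G} [H.FiniteIndex] {f : G → ℤ}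
    (hadd : ∀ a ∈ H, ∀ y, f (a * y) = f a + f y) (hunb : ¬ ∃ B : ℤ, ∀ x : G, |f x| ≤ B) :
    ∃ a ∈ H, f a ≠ 0 := by
  by_contra! hzero
  have hfin : (Set.range f).Finite :=
    H.finite_range_of_forall_mul_left_eq fun a ha y => by rw [hadd a ha, hzero a ha, zero_add]
  obtain ⟨B, hB⟩ := (hfin.image abs).bddAbove
  exact hunb ⟨B, fun x => hB ⟨f x, ⟨x, rfl⟩, rfl⟩⟩

end

theorem finite_orbit_unbounded_functional_is_virtualHom_general
    {G : Type*} [Group G] (d : G → G → ℤ)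
    (h : G → ℤ)
    (hb : ∃ u : ℕ → G, ∀ y : G, ∀ᶠ n in atTop, d (u n) y - d (u n) 1 = h y)
    (hunb : ¬ ∃ B : ℤ, ∀ x : G, |h x| ≤ B)
    (horb : (Set.range fun x : G => actZ x h).Finite) :
    ∃ H : Subgroup G, (∀ x : G, x ∈ H ↔ actZ x h = h) ∧ H.FiniteIndex ∧
      (∀ a b : G, a ∈ H → b ∈ H → h (a * b) = h a + h b) ∧
      (∃ a ∈ H, h a ≠ 0) ∧ IsVirtualHom h := by
  obtain ⟨u, hu⟩ := hb
  have h1 : h 1 = 0 := by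
    obtain ⟨n, hn⟩ := (hu 1).exists
    simpa using hn.symm
  let ĥ : NormalizedFun G := ⟨h, h1⟩
  have hFI : (stabilizer G ĥ).FiniteIndex :=
    finiteIndex_stabilizer_of_finite_orbit (NormalizedFun.orbit_finite_iff.mpr horb)
  have hadd : ∀ a b : G, a ∈ stabilizer G ĥ → b ∈ stabilizer G ĥ → h (a * b) = h a + h b :=
    fun a b ha _ => NormalizedFun.map_mul_of_mem_stabilizer ha b
  have hne : ∃ a ∈ stabilizer G ĥ, h a ≠ 0 :=
    exists_mem_ne_zero_of_unbounded (fun _ ha => NormalizedFun.map_mul_of_mem_stabilizer ha) hunb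
  exact ⟨stabilizer G ĥ, fun _ => NormalizedFun.mem_stabilizer_iff, hFI, hadd, hne,
    stabilizer G ĥ, hFI, hadd, hne⟩

/-- For a left-invariant integer-valued metric `d` on `G` and an
unbounded metric functional `h : G → ℤ` in `∂(G,d)` with finite orbit, the
stabilizer `H` of `h` has finite index and `h` restricts to a nontrivial
homomorphism `H → ℤ`; in particular `h` is a virtual homomorphism on `G`.
(Pointwise convergence of the integer-valued Busemann functions `b_{xₙ}` to `h`
means that for each `y` the sequence `b_{xₙ}(y)` is eventually equal to `h(y)`.) -/
theorem finite_orbit_unbounded_functional_is_virtualHom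
    {G : Type*} [Group G] (d : G → G → ℤ)
    (hnonneg : ∀ x y : G, 0 ≤ d x y)
    (hzero : ∀ x y : G, d x y = 0 ↔ x = y)
    (hsymm : ∀ x y : G, d x y = d y x)
    (htri : ∀ x y z : G, d x z ≤ d x y + d y z)
    (hinv : ∀ x y z : G, d (z * x) (z * y) = d x y)
    (h : G → ℤ)
    (hb : ∃ u : ℕ → G, ∀ y : G, ∀ᶠ n in atTop, d (u n) y - d (u n) 1 = h y)
    (hnb : ∀ x : G, h ≠ fun y => d x y - d x 1)
    (hunb : ¬ ∃ B : ℤ, ∀ x : G, |h x| ≤ B)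
    (horb : (Set.range fun x : G => actZ x h).Finite) :
    ∃ H : Subgroup G, (∀ x : G, x ∈ H ↔ actZ x h = h) ∧ H.FiniteIndex ∧
      (∀ a b : G, a ∈ H → b ∈ H → h (a * b) = h a + h b) ∧
      (∃ a ∈ H, h a ≠ 0) ∧ IsVirtualHom h :=
  finite_orbit_unbounded_functional_is_virtualHom_general d h hb hunb horb
end
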